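/- For θ = √2/2 = [1,2,2,2,...], the strictly heavy set H*_θ is the singleton {θ/2} = {1/(2√2)}; equivalently, the alternating geometric series (1/2)Σ_{i=0}^∞ (-1)ⁱ(√2-1)ⁱ equals 1/(2√2). -/
import Mathlib


open Filter Set

/-- The function `f = χ_{[0,1/2]} - χ_{(1/2,1)}` on the circle, evaluated at `x mod 1`. -/
noncomputable def circf (x : ℝ) : ℝ := if Int.fract x ≤ 1/2 then 1 else -1

/-- Birkhoff sums `Sₙ(x) = Σ_{i=0}^{n-1} f(x + iθ)`. -/
noncomputable def birk (θ : ℝ) (n : ℕ) (x : ℝ) : ℝ :=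
  ∑ i ∈ Finset.range n, circf (x + i * θ)

/-- The heavy set `H_θ`. -/
noncomputable def heavy (θ : ℝ) : Set ℝ :=
  {x ∈ Set.Ico (0:ℝ) 1 | ∀ n : ℕ, 1 ≤ n → 0 ≤ birk θ n x}

/-- The strictly heavy set `H*_θ`. -/
noncomputable def sheavy (θ : ℝ) : Set ℝ :=
  {x ∈ Set.Ico (0:ℝ) 1 | ∀ n : ℕ, 1 ≤ n → 0 < birk θ n x}

lemma s2_sq : Real.sqrt 2 * Real.sqrt 2 = 2 := Real.mul_self_sqrt (by norm_num)
lemma s2_gt : 1.414 < Real.sqrt 2 := by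
  nlinarith [s2_sq, Real.sqrt_nonneg 2]
lemma s2_lt : Real.sqrt 2 < 1.415 := by
  nlinarith [s2_sq, Real.sqrt_nonneg 2]

lemma fract01 {y : ℝ} (h0 : 0 ≤ y) (h1 : y < 1) : Int.fract y = y :=
  Int.fract_eq_self.2 ⟨h0, h1⟩

lemma fract12 {y : ℝ} (h0 : 1 ≤ y) (h1 : y < 2) : Int.fract y = y - 1 := by
  calc Int.fract y = Int.fract (y - 1 + ((1:ℤ):ℝ)) := by norm_num
    _ = Int.fract (y - 1) := Int.fract_add_intCast _ _
    _ = y - 1 := fract01 (by linarith) (by linarith)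

lemma circf_one {y : ℝ} (h0 : 0 ≤ y) (h1 : y ≤ 1/2) : circf y = 1 := by
  unfold circf; rw [fract01 h0 (by linarith)]; exact if_pos h1

lemma circf_neg {y : ℝ} (h0 : 1/2 < y) (h1 : y < 1) : circf y = -1 := by
  unfold circf; rw [fract01 (by linarith) h1]; exact if_neg (by linarith)

lemma circf_one' {y : ℝ} (h0 : 1 ≤ y) (h1 : y ≤ 3/2) : circf y = 1 := by
  unfold circf; rw [fract12 h0 (by linarith)]; exact if_pos (by linarith)

lemma circf_neg' {y : ℝ} (h0 : 3/2 < y) (h1 : y < 2) : circf y = -1 := by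
  unfold circf; rw [fract12 (by linarith) h1]; exact if_neg (by linarith)

lemma circf_ge (y : ℝ) : -1 ≤ circf y := by
  unfold circf; split <;> norm_num

lemma circf_add_int (y : ℝ) (N : ℤ) : circf (y + N) = circf y := by
  unfold circf; rw [Int.fract_add_intCast]

lemma birk_add (θ : ℝ) (a b : ℕ) (x : ℝ) :
    birk θ (a + b) x = birk θ a x + birk θ b (x + a * θ) := by
  unfold birk
  rw [Finset.sum_range_add]
  congr 1
  refine Finset.sum_congr rfl fun i _ => ?_
  congr 1
  push_cast
  ring

lemma birk_add_int (θ : ℝ) (n : ℕ) (x : ℝ) (N : ℤ) :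
    birk θ n (x + N) = birk θ n x := by
  unfold birk
  refine Finset.sum_congr rfl fun i _ => ?_
  rw [show x + (N:ℝ) + i * θ = (x + i * θ) + N by ring, circf_add_int]

lemma birk_zero (θ x : ℝ) : birk θ 0 x = 0 := by simp [birk]

lemma birk_one (θ x : ℝ) : birk θ 1 x = circf x := by simp [birk]

lemma birk_two (θ x : ℝ) : birk θ 2 x = circf x + circf (x + θ) := by
  simp [birk, Finset.sum_range_succ]

lemma birk_three (θ x : ℝ) :
    birk θ 3 x = circf x + circf (x + θ) + circf (x + 2*θ) := by
  simp [birk, Finset.sum_range_succ]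


noncomputable def RR (v : ℝ) : ℕ := if v < 1 - Real.sqrt 2 / 2 then 1 else 3
noncomputable def TT (v : ℝ) : ℝ :=
  if v < 1 - Real.sqrt 2 / 2 then v + Real.sqrt 2 / 2 else v + Real.sqrt 2 / 2 - 1
noncomputable def PS (v : ℝ) : ℝ := 1/2 - (Real.sqrt 2 - 1) * v
noncomputable def FF : ℕ → ℝ → ℕ
  | 0, _ => 0
  | k+1, v => RR v + FF k (TT v)

lemma TT_mem {v : ℝ} (h0 : 0 ≤ v) (h1 : v < 1) : 0 ≤ TT v ∧ TT v < 1 := by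
  have g1 := s2_gt; have g2 := s2_lt
  unfold TT; split_ifs with h <;> constructor <;> linarith

lemma PS_bounds {v : ℝ} (h0 : 0 ≤ v) (h1 : v < 1) : 0 < PS v ∧ PS v ≤ 1/2 := by
  have g1 := s2_gt; have g2 := s2_lt
  unfold PS; constructor <;> nlinarith

lemma block_sum {v : ℝ} (h0 : 0 ≤ v) (h1 : v < 1) :
    birk (Real.sqrt 2 / 2) (RR v) (PS v) = circf v := by
  have g1 := s2_gt; have g2 := s2_lt
  obtain ⟨p0, p1⟩ := PS_bounds h0 h1
  have hps : circf (PS v) = 1 := circf_one (le_of_lt p0) p1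
  unfold RR; split_ifs with h
  · rw [birk_one, hps, circf_one h0 (by linarith)]
  · push_neg at h
    rw [birk_three, hps]
    unfold PS at *
    rcases le_or_gt v (1/2) with hv | hv
    · rw [circf_one' (by nlinarith) (by nlinarith),
        circf_neg' (by nlinarith) (by nlinarith), circf_one h0 hv]
      ring
    · rw [circf_neg (by nlinarith) (by nlinarith),
        circf_neg' (by nlinarith) (by nlinarith), circf_neg hv h1]
      ring

lemma block_jump {v : ℝ} :
    PS v + (RR v) * (Real.sqrt 2 / 2) =
      PS (TT v) + ((if v < 1 - Real.sqrt 2 / 2 then (1:ℤ) else 2) : ℤ) := by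
  unfold RR TT PS; split_ifs with h <;> push_cast <;>
    linear_combination (1/2) * s2_sq

lemma block_within {v : ℝ} (h0 : 0 ≤ v) (h1 : v < 1) :
    ∀ j, j < RR v → 0 ≤ birk (Real.sqrt 2 / 2) j (PS v) := by
  obtain ⟨p0, p1⟩ := PS_bounds h0 h1
  have hps : circf (PS v) = 1 := circf_one (le_of_lt p0) p1
  intro j hj
  unfold RR at hj
  split_ifs at hj with h
  · interval_cases j
    · rw [birk_zero]
  · interval_cases j
    · rw [birk_zero]
    · rw [birk_one, hps]; norm_num
    · rw [birk_two, hps]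
      have := circf_ge (PS v + Real.sqrt 2 / 2)
      linarith

lemma RR_ge1 (v : ℝ) : 1 ≤ RR v := by unfold RR; split <;> norm_num

lemma FF_main : ∀ k : ℕ, ∀ v : ℝ, 0 ≤ v → v < 1 →
    birk (Real.sqrt 2 / 2) (FF k v) (PS v) = birk (Real.sqrt 2 / 2) k v := by
  intro k
  induction k with
  | zero => intro v _ _; simp [FF, birk_zero]
  | succ k ih =>
    intro v h0 h1
    obtain ⟨t0, t1⟩ := TT_mem h0 h1
    have step1 : birk (Real.sqrt 2 / 2) (FF (k+1) v) (PS v)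
        = circf v + birk (Real.sqrt 2 / 2) k (TT v) := by
      show birk (Real.sqrt 2 / 2) (RR v + FF k (TT v)) (PS v) = _
      rw [birk_add, block_sum h0 h1, block_jump, birk_add_int, ih (TT v) t0 t1]
    have step2 : birk (Real.sqrt 2 / 2) (k+1) v
        = circf v + birk (Real.sqrt 2 / 2) k (v + Real.sqrt 2 / 2) := by
      rw [show k + 1 = 1 + k by omega, birk_add, birk_one]
      norm_num
    have step3 : birk (Real.sqrt 2 / 2) k (TT v)
        = birk (Real.sqrt 2 / 2) k (v + Real.sqrt 2 / 2) := by
      unfold TT; split_ifs with h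
      · rfl
      · rw [show v + Real.sqrt 2 / 2 - 1 = (v + Real.sqrt 2 / 2) + ((-1:ℤ):ℝ) by
          push_cast; ring, birk_add_int]
    rw [step1, step2, step3]

lemma FF_ge : ∀ k : ℕ, ∀ v : ℝ, k ≤ FF k v := by
  intro k
  induction k with
  | zero => intro v; simp [FF]
  | succ k ih =>
    intro v
    have h1 := RR_ge1 v
    have h2 := ih (TT v)
    show k + 1 ≤ RR v + FF k (TT v)
    omega

lemma FF_succ_right : ∀ k : ℕ, ∀ v : ℝ, FF (k+1) v = FF k v + RR (TT^[k] v) := by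
  intro k
  induction k with
  | zero => intro v; simp [FF]
  | succ k ih =>
    intro v
    show RR v + FF (k+1) (TT v) = (RR v + FF k (TT v)) + _
    rw [ih (TT v), Function.iterate_succ_apply]
    omega

lemma iter_mem : ∀ k : ℕ, ∀ v : ℝ, 0 ≤ v → v < 1 → 0 ≤ TT^[k] v ∧ TT^[k] v < 1 := by
  intro k
  induction k with
  | zero => intro v h0 h1; simpa using ⟨h0, h1⟩
  | succ k ih =>
    intro v h0 h1
    obtain ⟨t0, t1⟩ := TT_mem h0 h1
    rw [Function.iterate_succ_apply]
    exact ih (TT v) t0 t1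

lemma orbit : ∀ k : ℕ, ∀ v : ℝ, 0 ≤ v → v < 1 →
    ∃ N : ℤ, PS v + (FF k v) * (Real.sqrt 2 / 2) = PS (TT^[k] v) + N := by
  intro k
  induction k with
  | zero => intro v _ _; exact ⟨0, by simp [FF]⟩
  | succ k ih =>
    intro v h0 h1
    obtain ⟨t0, t1⟩ := TT_mem h0 h1
    obtain ⟨N, hN⟩ := ih (TT v) t0 t1
    refine ⟨(if v < 1 - Real.sqrt 2 / 2 then (1:ℤ) else 2) + N, ?_⟩
    have e1 : PS v + (FF (k+1) v) * (Real.sqrt 2 / 2)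
        = (PS v + (RR v) * (Real.sqrt 2 / 2)) + (FF k (TT v)) * (Real.sqrt 2 / 2) := by
      show PS v + ((RR v + FF k (TT v) : ℕ) : ℝ) * _ = _
      push_cast; ring
    rw [e1, block_jump, Function.iterate_succ_apply]
    push_cast
    linarith [hN]

lemma FF_big : ∀ k : ℕ, ∀ v : ℝ, 0 ≤ v → v < 1 → 2*k ≤ FF k v + 1 := by
  intro k
  induction k using Nat.strong_induction_on with
  | _ k ih =>
    match k with
    | 0 => intro v _ _; simp
    | 1 =>
      intro v _ _
      have h1 := RR_ge1 v
      show 2*1 ≤ (RR v + FF 0 (TT v)) + 1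
      simp [FF]; omega
    | (k+2) =>
      intro v h0 h1
      obtain ⟨t0, t1⟩ := TT_mem h0 h1
      by_cases h : v < 1 - Real.sqrt 2 / 2
      · have hTv : ¬ (TT v < 1 - Real.sqrt 2 / 2) := by
          have := s2_gt
          unfold TT; rw [if_pos h]; push_neg; linarith
        obtain ⟨t0', t1'⟩ := TT_mem t0 t1
        have e : FF (k+2) v = 1 + (3 + FF k (TT (TT v))) := by
          show RR v + FF (k+1) (TT v) = _
          rw [show RR v = 1 by unfold RR; rw [if_pos h]]
          show 1 + (RR (TT v) + FF k (TT (TT v))) = _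
          rw [show RR (TT v) = 3 by unfold RR; rw [if_neg hTv]]
        have hk := ih k (by omega) (TT (TT v)) t0' t1'
        omega
      · have e : FF (k+2) v = 3 + FF (k+1) (TT v) := by
          show RR v + FF (k+1) (TT v) = _
          rw [show RR v = 3 by unfold RR; rw [if_neg h]]
        have hk := ih (k+1) (by omega) (TT v) t0 t1
        omega

lemma PS_fix : PS (Real.sqrt 2 / 4) = Real.sqrt 2 / 4 := by
  unfold PS; linear_combination (-(1:ℝ)/4) * s2_sq

lemma pos_q : ∀ n : ℕ, 1 ≤ n →
    (1:ℝ) ≤ birk (Real.sqrt 2 / 2) n (Real.sqrt 2 / 4) := by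
  intro n
  induction n using Nat.strong_induction_on with
  | _ n ih =>
    intro hn
    have g1 := s2_gt; have g2 := s2_lt
    have hq0 : (0:ℝ) ≤ Real.sqrt 2 / 4 := by linarith
    have hq1 : Real.sqrt 2 / 4 < 1 := by linarith
    have hc1 : circf (Real.sqrt 2 / 4) = 1 := circf_one hq0 (by linarith)
    rcases lt_or_ge n 3 with h3 | h3
    · have hn12 : n = 1 ∨ n = 2 := by omega
      rcases hn12 with rfl | rfl
      · rw [birk_one, hc1]
      · rw [birk_two, hc1, circf_one' (by linarith) (by linarith)]
        norm_num
    · set q : ℝ := Real.sqrt 2 / 4 with hqdef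
      set k := Nat.findGreatest (fun k => FF k q ≤ n) n with hkdef
      have hP0 : FF 0 q ≤ n := by simp [FF]
      have hk : FF k q ≤ n := Nat.findGreatest_spec (P := fun k => FF k q ≤ n) (Nat.zero_le n) hP0
      have hbigk := FF_big k q hq0 hq1
      have hbign := FF_big n q hq0 hq1
      have hksucc : n < FF (k+1) q := by
        rcases le_or_gt (k+1) n with h | h
        · by_contra hcon
          push_neg at hcon
          exact Nat.findGreatest_is_greatest (Nat.lt_succ_self k) h hcon
        · have hkn : k = n := le_antisymm (Nat.findGreatest_le n) (by omega)
          omega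
      have hRRq : RR q = 3 := by
        unfold RR; rw [if_neg]; push_neg; rw [hqdef]; linarith
      have hkge1 : 1 ≤ k := by
        by_contra hcon
        have hk0 : k = 0 := by omega
        have hF1 : FF 1 q = 3 := by
          show RR q + FF 0 (TT q) = 3
          simp [FF, hRRq]
        rw [hk0] at hksucc
        norm_num at hksucc
        omega
      have hkltn : k < n := by omega
      obtain ⟨N, hN⟩ := orbit k q hq0 hq1
      have hPSq : PS q = q := PS_fix
      have hsplit := birk_add (Real.sqrt 2 / 2) (FF k q) (n - FF k q) q
      rw [show FF k q + (n - FF k q) = n by omega] at hsplit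
      have hfirst : birk (Real.sqrt 2 / 2) (FF k q) q = birk (Real.sqrt 2 / 2) k q := by
        have h := FF_main k q hq0 hq1
        rw [hPSq] at h
        exact h
      have hiter := iter_mem k q hq0 hq1
      have hjlt : n - FF k q < RR (TT^[k] q) := by
        have := FF_succ_right k q
        omega
      have hsecond : 0 ≤ birk (Real.sqrt 2 / 2) (n - FF k q)
          (q + (FF k q : ℝ) * (Real.sqrt 2 / 2)) := by
        rw [show q + (FF k q : ℝ) * (Real.sqrt 2 / 2) = PS (TT^[k] q) + (N:ℝ) by
          rw [← hN, hPSq], birk_add_int]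
        exact block_within hiter.1 hiter.2 _ hjlt
      have hih := ih k hkltn hkge1
      rw [hsplit, hfirst]
      linarith

lemma mem_sheavy_iff {x : ℝ} : x ∈ sheavy (Real.sqrt 2 / 2) ↔
    (0 ≤ x ∧ x < 1) ∧ ∀ n : ℕ, 1 ≤ n → 0 < birk (Real.sqrt 2 / 2) n x := by
  simp [sheavy, Set.mem_Ico, Set.mem_setOf_eq]

lemma sheavy_step {x : ℝ} (hx : x ∈ sheavy (Real.sqrt 2 / 2)) :
    (1/2 - x) * (Real.sqrt 2 + 1) ∈ sheavy (Real.sqrt 2 / 2) := by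
  have g1 := s2_gt; have g2 := s2_lt
  obtain ⟨⟨hx0, hx1⟩, hS⟩ := mem_sheavy_iff.1 hx
  have hxhalf : x ≤ 1/2 := by
    by_contra h
    push_neg at h
    have := hS 1 le_rfl
    rw [birk_one, circf_neg h hx1] at this
    linarith
  have hxlow : 3/2 - Real.sqrt 2 < x := by
    by_contra h
    push_neg at h
    have := hS 2 (by norm_num)
    rw [birk_two, circf_one hx0 (by linarith),
      circf_neg (by linarith) (by linarith)] at this
    linarith
  have hv0 : 0 ≤ (1/2 - x) * (Real.sqrt 2 + 1) := by nlinarith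
  have hv1 : (1/2 - x) * (Real.sqrt 2 + 1) < 1 := by nlinarith [s2_sq]
  have hPSv : PS ((1/2 - x) * (Real.sqrt 2 + 1)) = x := by
    unfold PS
    linear_combination (x - 1/2) * s2_sq
  refine mem_sheavy_iff.2 ⟨⟨hv0, hv1⟩, fun n hn => ?_⟩
  have hmain := FF_main n _ hv0 hv1
  rw [hPSv] at hmain
  rw [← hmain]
  exact hS _ (le_trans hn (FF_ge n _))

lemma sheavy_sub : sheavy (Real.sqrt 2 / 2) ⊆ {Real.sqrt 2 / 2 / 2} := by
  intro x hx
  have g1 := s2_gt; have g2 := s2_lt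
  simp only [Set.mem_singleton_iff]
  rw [show Real.sqrt 2 / 2 / 2 = Real.sqrt 2 / 4 by ring]
  by_contra hne
  set G : ℕ → ℝ := fun j => (fun y => (1/2 - y) * (Real.sqrt 2 + 1))^[j] x with hGdef
  have hG : ∀ j, G j ∈ sheavy (Real.sqrt 2 / 2) ∧
      |G j - Real.sqrt 2 / 4| = (Real.sqrt 2 + 1)^j * |x - Real.sqrt 2 / 4| := by
    intro j
    induction j with
    | zero => simpa [hGdef] using hx
    | succ j ih =>
      have hGs : G (j+1) = (1/2 - G j) * (Real.sqrt 2 + 1) := by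
        simp only [hGdef]
        exact Function.iterate_succ_apply' _ _ _
      constructor
      · rw [hGs]; exact sheavy_step ih.1
      · rw [hGs]
        have key : (1/2 - G j) * (Real.sqrt 2 + 1) - Real.sqrt 2 / 4
            = -((Real.sqrt 2 + 1) * (G j - Real.sqrt 2 / 4)) := by
          linear_combination (-(1:ℝ)/4) * s2_sq
        rw [key, abs_neg, abs_mul, abs_of_pos (by linarith : (0:ℝ) < Real.sqrt 2 + 1),
          ih.2, pow_succ]
        ring
  have hbound : ∀ j, |G j - Real.sqrt 2 / 4| ≤ 1 := by
    intro j
    obtain ⟨⟨h0, h1⟩, _⟩ := mem_sheavy_iff.1 (hG j).1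
    rw [abs_le]
    constructor <;> linarith
  have heps : 0 < |x - Real.sqrt 2 / 4| := abs_pos.2 (sub_ne_zero.2 hne)
  obtain ⟨j, hj⟩ := pow_unbounded_of_one_lt (1 / |x - Real.sqrt 2 / 4|)
    (by linarith : (1:ℝ) < Real.sqrt 2 + 1)
  have h1 : 1 < (Real.sqrt 2 + 1)^j * |x - Real.sqrt 2 / 4| := by
    rw [div_lt_iff₀ heps] at hj
    linarith
  have := hbound j
  rw [(hG j).2] at this
  linarith

/-- For `θ = √2/2 = [1,2,2,2,…]`, the strictly heavy set is the singleton `{θ/2}`,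
and indeed `(1/2)·Σ (-(√2-1))ⁱ = 1/(2√2) = θ/2`. -/
theorem stmt19 :
    sheavy (Real.sqrt 2 / 2) = {Real.sqrt 2 / 2 / 2} ∧
      (1/2) * ∑' i : ℕ, (-(Real.sqrt 2 - 1)) ^ i = 1 / (2 * Real.sqrt 2) := by
  constructor
  · apply Set.Subset.antisymm sheavy_sub
    rw [Set.singleton_subset_iff]
    have g1 := s2_gt; have g2 := s2_lt
    rw [show Real.sqrt 2 / 2 / 2 = Real.sqrt 2 / 4 by ring]
    exact mem_sheavy_iff.2 ⟨⟨by linarith, by linarith⟩,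
      fun n hn => lt_of_lt_of_le one_pos (pos_q n hn)⟩
  · have g1 := s2_gt; have g2 := s2_lt
    have hr : ‖-(Real.sqrt 2 - 1)‖ < 1 := by
      rw [Real.norm_eq_abs, abs_neg, abs_of_nonneg (by linarith)]
      linarith
    rw [tsum_geometric_of_norm_lt_one hr,
      show (1:ℝ) - (-(Real.sqrt 2 - 1)) = Real.sqrt 2 by ring]
    have hs : Real.sqrt 2 ≠ 0 := by linarith
    field_simp
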